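/- arXiv:2307.15348 — 7 statements merged into one kernel-verified Lean document; each statement's English description precedes it below -/
import Mathlib

section
/- Let n ≥ 2 be a natural number and let ℓ₁ ≥ ℓ₂ > 0 be real numbers with relative eigengap δ = (ℓ₁ − ℓ₂)/ℓ₁. Then 2·(Real.log n)/n + Real.log ℓ₁ + Real.log ℓ₂ − 2·Real.log((ℓ₁ + ℓ₂)/2) > 0 if and only if δ < 2·(1 − n^(2/n) + n^(1/n)·Real.sqrt(n^(2/n) − 1)). -/
open Real

/-!
With `δ` the relative gap, `ℓ₂ = ℓ₁ (1 - δ)` and the BIC difference is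
`log (n^(2/n) ℓ₁ ℓ₂ / ((ℓ₁ + ℓ₂)/2)²)`, so it is positive iff
`(2 - δ)² < 4 c² (1 - δ)` with `c = n^(1/n) ≥ 1`. This is the quadratic inequality
`(δ - r₋)(δ - r₊) < 0` with roots `r± = 2 (1 - c² ± c √(c² - 1))`; since `r₋ ≤ 0 ≤ δ`,
it amounts to `δ < r₊`.
-/

lemma Real.log_rpow_of_nonneg {x : ℝ} (hx : 0 ≤ x) (y : ℝ) : log (x ^ y) = y * log x := by
  rcases hx.eq_or_lt with rfl | hx
  · rcases eq_or_ne y 0 with rfl | hy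
    · simp
    · simp [zero_rpow hy]
  · exact log_rpow hx y

lemma one_le_natCast_rpow_one_div (n : ℕ) : 1 ≤ (n : ℝ) ^ ((1 : ℝ) / n) := by
  rcases n.eq_zero_or_pos with rfl | hn
  · simp
  · exact one_le_rpow (by exact_mod_cast hn) (by positivity)

lemma natCast_rpow_one_div_sq (n : ℕ) :
    ((n : ℝ) ^ ((1 : ℝ) / n)) ^ 2 = (n : ℝ) ^ ((2 : ℝ) / n) := by
  rw [← rpow_natCast, ← rpow_mul n.cast_nonneg]
  ring_nf

lemma log_add_log_sub_two_mul_log_pos_iff {a x y m : ℝ} (ha : 0 < a) (hx : 0 < x) (hy : 0 < y)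
    (hm : 0 < m) : 0 < log a + log x + log y - 2 * log m ↔ m ^ 2 < a * x * y := by
  have hlog_sq : 2 * log m = log (m ^ 2) := by rw [log_pow]; norm_num
  rw [← log_mul ha.ne' hx.ne', ← log_mul (by positivity) hy.ne', hlog_sq, sub_pos,
    log_lt_log_iff (by positivity) (by positivity)]

lemma add_div_two_sq_lt_mul_mul_iff {a ℓ₁ ℓ₂ : ℝ} (hℓ₁ : 0 < ℓ₁) :
    ((ℓ₁ + ℓ₂) / 2) ^ 2 < a * ℓ₁ * ℓ₂ ↔
      (2 - (ℓ₁ - ℓ₂) / ℓ₁) ^ 2 < 4 * a * (1 - (ℓ₁ - ℓ₂) / ℓ₁) := by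
  have hlhs : (2 - (ℓ₁ - ℓ₂) / ℓ₁) ^ 2 = 4 / ℓ₁ ^ 2 * ((ℓ₁ + ℓ₂) / 2) ^ 2 := by
    field_simp; ring
  have hrhs : 4 * a * (1 - (ℓ₁ - ℓ₂) / ℓ₁) = 4 / ℓ₁ ^ 2 * (a * ℓ₁ * ℓ₂) := by
    field_simp; ring
  rw [hlhs, hrhs, mul_lt_mul_iff_right₀ (by positivity)]

lemma two_sub_sq_lt_iff {c δ : ℝ} (hc : 1 ≤ c) (hδ : 0 ≤ δ) :
    (2 - δ) ^ 2 < 4 * c ^ 2 * (1 - δ) ↔ δ < 2 * (1 - c ^ 2 + c * √(c ^ 2 - 1)) := by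
  set s := √(c ^ 2 - 1)
  have hc2 : 1 ≤ c ^ 2 := by nlinarith
  have hs : s ^ 2 = c ^ 2 - 1 := sq_sqrt (by linarith)
  have hcs : 0 ≤ c * s := by positivity
  have hfactor : (2 - δ) ^ 2 - 4 * c ^ 2 * (1 - δ) =
      (δ - 2 * (1 - c ^ 2 - c * s)) * (δ - 2 * (1 - c ^ 2 + c * s)) := by
    linear_combination 4 * c ^ 2 * hs
  rw [← sub_neg, hfactor]
  constructor
  · intro h
    by_contra! hge
    exact h.not_ge (mul_nonneg (by linarith) (by linarith))
  · intro h
    -- `r₋ + r₊ = 4 (1 - c²) ≤ 0`, so `r₋ ≤ -r₊ < -δ ≤ δ`.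
    exact mul_neg_of_pos_of_neg (by linarith) (by linarith)

theorem bic_releigengap_threshold_general (n : ℕ)
    (ℓ₁ ℓ₂ : ℝ) (h12 : ℓ₂ ≤ ℓ₁) (h2pos : 0 < ℓ₂)
    (δ : ℝ) (hδ : δ = (ℓ₁ - ℓ₂) / ℓ₁) :
    0 < 2 * Real.log n / n + Real.log ℓ₁ + Real.log ℓ₂ - 2 * Real.log ((ℓ₁ + ℓ₂) / 2) ↔
      δ < 2 * (1 - (n : ℝ) ^ ((2 : ℝ) / n) +
        (n : ℝ) ^ ((1 : ℝ) / n) * Real.sqrt ((n : ℝ) ^ ((2 : ℝ) / n) - 1)) := by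
  have hℓ₁ : 0 < ℓ₁ := h2pos.trans_le h12
  have hc := one_le_natCast_rpow_one_div n
  have hlog : 2 * log n / n = log ((n : ℝ) ^ ((2 : ℝ) / n)) := by
    rw [log_rpow_of_nonneg n.cast_nonneg]; ring
  rw [hlog, log_add_log_sub_two_mul_log_pos_iff (by rw [← natCast_rpow_one_div_sq]; positivity)
    hℓ₁ h2pos (by positivity), add_div_two_sq_lt_mul_mul_iff hℓ₁, ← hδ,
    ← natCast_rpow_one_div_sq]
  exact two_sub_sq_lt_iff hc (hδ ▸ div_nonneg (sub_nonneg.2 h12) hℓ₁.le)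

theorem bic_releigengap_threshold (n : ℕ) (hn : 2 ≤ n)
    (ℓ₁ ℓ₂ : ℝ) (h12 : ℓ₂ ≤ ℓ₁) (h2pos : 0 < ℓ₂)
    (δ : ℝ) (hδ : δ = (ℓ₁ - ℓ₂) / ℓ₁) :
    0 < 2 * Real.log n / n + Real.log ℓ₁ + Real.log ℓ₂ - 2 * Real.log ((ℓ₁ + ℓ₂) / 2) ↔
      δ < 2 * (1 - (n : ℝ) ^ ((2 : ℝ) / n) +
        (n : ℝ) ^ ((1 : ℝ) / n) * Real.sqrt ((n : ℝ) ^ ((2 : ℝ) / n) - 1)) :=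
  bic_releigengap_threshold_general n ℓ₁ ℓ₂ h12 h2pos δ hδ
end

section
/- Let n ≥ 1 be a natural number and let ℓ₁ ≥ ℓ₂ > 0 be real numbers with relative eigengap δ = (ℓ₁ − ℓ₂)/ℓ₁. Then 4/n + Real.log ℓ₁ + Real.log ℓ₂ − 2·Real.log((ℓ₁ + ℓ₂)/2) > 0 if and only if δ < 2·(1 − Real.exp(4/n) + Real.exp(2/n)·Real.sqrt(Real.exp(4/n) − 1)). -/
/-!
With `c = exp (2 / n)` the sign condition reads `((ℓ₁ + ℓ₂) / 2) ^ 2 < c ^ 2 ℓ₁ ℓ₂` after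
exponentiating. Substituting `ℓ₂ = ℓ₁ (1 - δ)` turns it into the quadratic inequality
`(2 - δ) ^ 2 < 4 c ^ 2 (1 - δ)` in `δ`, whose roots are `2 (1 - c ^ 2) ± 2 c √(c ^ 2 - 1)`.
Since `c ≥ 1` the smaller root is `≤ 0 ≤ δ`, so only the larger root matters.
-/

open Real

/-- The larger root of `δ ↦ (2 - δ) ^ 2 - 4 c ^ 2 (1 - δ)`. -/
noncomputable def relEigengapThreshold (c : ℝ) : ℝ :=
  2 * (1 - c ^ 2 + c * √(c ^ 2 - 1))

theorem sq_two_sub_lt_iff_lt_relEigengapThreshold {c δ : ℝ} (hc : 1 ≤ c) (hδ : 0 ≤ δ) :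
    (2 - δ) ^ 2 < 4 * c ^ 2 * (1 - δ) ↔ δ < relEigengapThreshold c := by
  set s := √(c ^ 2 - 1)
  have hs : 0 ≤ s := sqrt_nonneg _
  have hs2 : s ^ 2 = c ^ 2 - 1 := sq_sqrt (by nlinarith)
  set rHi := relEigengapThreshold c
  set rLo := 2 * (1 - c ^ 2) - 2 * c * s
  have factored : (2 - δ) ^ 2 - 4 * c ^ 2 * (1 - δ) = (δ - rHi) * (δ - rLo) := by
    simp only [rHi, rLo, relEigengapThreshold]
    linear_combination (4 * c ^ 2) * hs2
  have hrLo : rLo ≤ 0 := by nlinarith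
  constructor
  · intro h
    by_contra! hge
    nlinarith [mul_nonneg (sub_nonneg.mpr hge) (sub_nonneg.mpr (hrLo.trans hδ))]
  · intro h
    -- `rLo = 4 (1 - c ^ 2) - rHi ≤ -rHi < -δ ≤ δ`
    have hlow : rLo < δ := by
      have hsum : rHi + rLo = 4 * (1 - c ^ 2) := by
        simp only [rHi, rLo, relEigengapThreshold]; ring
      nlinarith
    nlinarith [mul_neg_of_neg_of_pos (sub_neg.mpr h) (sub_pos.mpr hlow)]

theorem log_mean_sq_lt_iff {a b : ℝ} (t : ℝ) (ha : 0 < a) (hb : 0 < b) :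
    0 < 2 * t + log a + log b - 2 * log ((a + b) / 2) ↔
      ((a + b) / 2) ^ 2 < exp t ^ 2 * (a * b) := by
  have hlhs : log (((a + b) / 2) ^ 2) = 2 * log ((a + b) / 2) := by
    rw [log_pow]; push_cast; ring
  have hrhs : log (exp t ^ 2 * (a * b)) = 2 * t + log a + log b := by
    rw [log_mul (by positivity) (by positivity), log_mul ha.ne' hb.ne', log_pow, log_exp]
    push_cast; ring
  rw [← log_lt_log_iff (by positivity : 0 < ((a + b) / 2) ^ 2)
    (by positivity : 0 < exp t ^ 2 * (a * b)), hlhs, hrhs]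
  constructor <;> intro h <;> linarith

theorem mean_sq_lt_iff_sq_two_sub_lt {a b k δ : ℝ} (ha : 0 < a) (hδ : δ = (a - b) / a) :
    ((a + b) / 2) ^ 2 < k * (a * b) ↔ (2 - δ) ^ 2 < 4 * k * (1 - δ) := by
  have hb : b = a * (1 - δ) := by rw [hδ]; field_simp; ring
  rw [hb, show ((a + a * (1 - δ)) / 2) ^ 2 = a ^ 2 / 4 * (2 - δ) ^ 2 by ring,
    show k * (a * (a * (1 - δ))) = a ^ 2 / 4 * (4 * k * (1 - δ)) by ring]
  exact mul_lt_mul_iff_right₀ (by positivity)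

theorem aic_releigengap_threshold_general (n : ℕ)
    (ℓ₁ ℓ₂ : ℝ) (h12 : ℓ₂ ≤ ℓ₁) (h2pos : 0 < ℓ₂)
    (δ : ℝ) (hδ : δ = (ℓ₁ - ℓ₂) / ℓ₁) :
    0 < 4 / n + Real.log ℓ₁ + Real.log ℓ₂ - 2 * Real.log ((ℓ₁ + ℓ₂) / 2) ↔
      δ < 2 * (1 - Real.exp (4 / n) +
        Real.exp (2 / n) * Real.sqrt (Real.exp (4 / n) - 1)) := by
  have h1pos : 0 < ℓ₁ := h2pos.trans_le h12
  have hδ0 : 0 ≤ δ := hδ ▸ div_nonneg (sub_nonneg.mpr h12) h1pos.le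
  have hc : 1 ≤ exp (2 / n) := one_le_exp (by positivity)
  have hexp : exp (4 / n) = exp (2 / n) ^ 2 := by
    rw [← exp_nat_mul]; push_cast; ring_nf
  rw [show (4 / n : ℝ) = 2 * (2 / n) by ring, log_mean_sq_lt_iff _ h1pos h2pos,
    mean_sq_lt_iff_sq_two_sub_lt h1pos hδ, sq_two_sub_lt_iff_lt_relEigengapThreshold hc hδ0,
    ← show 4 / n = 2 * (2 / n : ℝ) by ring, hexp, relEigengapThreshold]

theorem aic_releigengap_threshold (n : ℕ) (hn : 1 ≤ n)
    (ℓ₁ ℓ₂ : ℝ) (h12 : ℓ₂ ≤ ℓ₁) (h2pos : 0 < ℓ₂)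
    (δ : ℝ) (hδ : δ = (ℓ₁ - ℓ₂) / ℓ₁) :
    0 < 4 / n + Real.log ℓ₁ + Real.log ℓ₂ - 2 * Real.log ((ℓ₁ + ℓ₂) / 2) ↔
      δ < 2 * (1 - Real.exp (4 / n) +
        Real.exp (2 / n) * Real.sqrt (Real.exp (4 / n) - 1)) :=
  aic_releigengap_threshold_general n ℓ₁ ℓ₂ h12 h2pos δ hδ
end

section
/- Let p ≥ 2 and equip the finite-dimensional real vector space of symmetric p×p real matrices with an additive Haar measure. Then the set of symmetric p×p real matrices having a repeated eigenvalue (i.e. matrices A such that the p real eigenvalues of A, counted with multiplicity, are not pairwise distinct) has measure zero. -/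
open Matrix MeasureTheory

/-- The subspace of symmetric `p × p` real matrices. -/
def symmetricMatrices (p : ℕ) : Submodule ℝ (Matrix (Fin p) (Fin p) ℝ) where
  carrier := {A | A.IsSymm}
  add_mem' hA hB := hA.add hB
  zero_mem' := Matrix.isSymm_zero
  smul_mem' c _ hA := hA.smul c

theorem isHermitian_of_mem_symmetricMatrices {p : ℕ} (A : symmetricMatrices p) :
    (A : Matrix (Fin p) (Fin p) ℝ).IsHermitian := by
  have h : (A : Matrix (Fin p) (Fin p) ℝ).IsSymm := A.2
  rwa [Matrix.IsHermitian, Matrix.conjTranspose_eq_transpose_of_trivial]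

/-!
A matrix has a repeated eigenvalue exactly when its characteristic polynomial `χ` is not
separable, i.e. when the resultant of `χ` and `χ'` vanishes. Evaluating the same resultant for the
universal characteristic polynomial shows that this is a polynomial in the matrix entries, and it
does not vanish at `diag(0, 1, …, p - 1)`. Restricted to the symmetric matrices it is therefore a
nonzero polynomial in linear coordinates, and the zero set of a nonzero real polynomial is
Lebesgue-null (induction on the number of variables and Fubini: almost every slice is the finite
root set of a nonzero univariate polynomial).
-/

open Polynomial in
theorem Polynomial.resultant_derivative_ne_zero_iff {K : Type*} [Field K] {f : K[X]}
    (hf : f ≠ 0) : f.resultant (derivative f) ≠ 0 ↔ f.Separable := by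
  rw [Ne, resultant_eq_zero_iff, separable_def]
  simp [hf]

namespace Matrix

open Polynomial

/-- Up to sign, the discriminant of the (monic) universal characteristic polynomial. -/
noncomputable def charpoly.univResultantDerivative (R n : Type*) [CommRing R] [Fintype n]
    [DecidableEq n] : MvPolynomial (n × n) R :=
  (univ R n).resultant (derivative (univ R n))

variable {n : Type*} [Fintype n] [DecidableEq n]

theorem resultant_charpoly_derivative_ne_zero_iff {K : Type*} [Field K] {M : Matrix n n K}
    {ev : n → K} (h : M.charpoly = ∏ i, (X - C (ev i))) :
    M.charpoly.resultant (derivative M.charpoly) ≠ 0 ↔ Function.Injective ev := by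
  rw [resultant_derivative_ne_zero_iff M.charpoly_monic.ne_zero, h, separable_prod_X_sub_C_iff]

theorem IsHermitian.resultant_charpoly_derivative_ne_zero_iff {𝕜 : Type*} [RCLike 𝕜]
    {A : Matrix n n 𝕜} (hA : A.IsHermitian) :
    A.charpoly.resultant (derivative A.charpoly) ≠ 0 ↔ Function.Injective hA.eigenvalues := by
  rw [Matrix.resultant_charpoly_derivative_ne_zero_iff hA.charpoly_eq]
  exact RCLike.ofReal_injective.of_comp_iff _

theorem charpoly.eval_univResultantDerivative {K : Type*} [Field K] [CharZero K]
    (M : Matrix n n K) :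
    MvPolynomial.eval (fun ij => M ij.1 ij.2) (univResultantDerivative K n) =
      M.charpoly.resultant (derivative M.charpoly) := by
  have hmap : (univ K n).map (MvPolynomial.eval fun ij => M ij.1 ij.2) = M.charpoly := by
    rw [MvPolynomial.eval, ← Algebra.algebraMap_self, univ_map_eval₂Hom]
    rfl
  rw [univResultantDerivative, ← hmap]
  simp only [natDegree_derivative]
  rw [(univ_monic K n).natDegree_map, derivative_map, resultant_map_map]

end Matrix

namespace MvPolynomial

theorem finite_setOf_eval_cons_eq_zero {K : Type*} [Field K] {n : ℕ}
    {P : MvPolynomial (Fin (n + 1)) K} {y : Fin n → K}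
    (hy : eval y (finSuccEquiv K n P).leadingCoeff ≠ 0) :
    {a : K | eval (Fin.cons a y) P = 0}.Finite := by
  have hQ : (finSuccEquiv K n P).map (eval y) ≠ 0 := fun h =>
    hy (by simpa using congrArg (Polynomial.coeff · (finSuccEquiv K n P).natDegree) h)
  simp_rw [eval_eq_eval_mv_eval']
  exact Polynomial.finite_setOfPred_isRoot hQ

theorem volume_setOf_eval_eq_zero : ∀ {n : ℕ} {P : MvPolynomial (Fin n) ℝ}, P ≠ 0 →
    volume {x | eval x P = 0} = 0
  | 0, P, hP => by
    obtain ⟨c, rfl⟩ : ∃ c, P = C c := ⟨_, eq_C_of_isEmpty P⟩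
    simp_all
  | n + 1, P, hP => by
    have hlead : (finSuccEquiv ℝ n P).leadingCoeff ≠ 0 := by
      simpa [Polynomial.leadingCoeff_ne_zero] using hP
    set e := MeasurableEquiv.piFinSuccAbove (fun _ => ℝ) 0
    set T : Set (ℝ × (Fin n → ℝ)) := {q | eval (Fin.cons q.1 q.2) P = 0}
    have heT : e ⁻¹' T = {x | eval x P = 0} := by
      ext x
      simp [e, T]
    have hT : MeasurableSet T := e.measurableSet_preimage.1 <|
      heT ▸ measurableSet_eq_fun (continuous_eval P).measurable measurable_const
    have hslices : ∀ᵐ y ∂(volume : Measure (Fin n → ℝ)), ∀ᵐ a ∂(volume : Measure ℝ),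
        (a, y) ∉ T := by
      filter_upwards [measure_eq_zero_iff_ae_notMem.1 (volume_setOf_eval_eq_zero hlead)] with y hy
      exact measure_eq_zero_iff_ae_notMem.1 ((finite_setOf_eval_cons_eq_zero hy).measure_zero _)
    have hTnull : volume T = 0 := measure_eq_zero_iff_ae_notMem.2 <|
      (Measure.ae_prod_iff_ae_ae hT.compl).2 ((Measure.ae_ae_comm hT.compl).2 hslices)
    rw [← heT, (volume_preserving_piFinSuccAbove (fun _ => ℝ) 0).measure_preimage
      hT.nullMeasurableSet]
    exact hTnull

end MvPolynomial

open MvPolynomial in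
theorem MeasureTheory.Measure.addHaar_setOf_eval_linearMap_eq_zero {E ι : Type*}
    [AddCommGroup E] [Module ℝ E] [TopologicalSpace E] [IsTopologicalAddGroup E]
    [ContinuousSMul ℝ E] [T2Space E] [FiniteDimensional ℝ E] [MeasurableSpace E] [BorelSpace E]
    (μ : Measure E) [μ.IsAddHaarMeasure] (L : E →ₗ[ℝ] ι → ℝ) {P : MvPolynomial ι ℝ} {x₀ : E}
    (hx₀ : eval (L x₀) P ≠ 0) :
    μ {x | eval (L x) P = 0} = 0 := by
  let b := Module.finBasis ℝ E
  let Q : MvPolynomial (Fin (Module.finrank ℝ E)) ℝ :=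
    bind₁ (fun i => ∑ j, C (L (b j) i) * X j) P
  have hQ : ∀ x, eval (b.equivFun x) Q = eval (L x) P := by
    intro x
    have hL : L x = fun i => ∑ j, b.equivFun x j * L (b j) i := by
      ext i
      conv_lhs => rw [← b.sum_equivFun x, _root_.map_sum]
      simp
    have hC : (eval (b.equivFun x)).comp C = RingHom.id ℝ := by ext; simp
    rw [hom_bind₁, hC, hL]
    simp [mul_comm]
  have hQ0 : Q ≠ 0 := fun h => hx₀ (by rw [← hQ, h, map_zero])
  have hcont : Continuous b.equivFun := b.equivFun.toLinearMap.continuous_of_finiteDimensional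
  have hZ : MeasurableSet {y | eval y Q = 0} :=
    measurableSet_eq_fun (continuous_eval Q).measurable measurable_const
  have hmap : μ.map b.equivFun {y | eval y Q = 0} = 0 := by
    rw [(μ.map b.equivFun).isAddLeftInvariant_eq_smul volume]
    simp [volume_setOf_eval_eq_zero hQ0]
  rw [Measure.map_apply hcont.measurable hZ] at hmap
  simpa only [Set.preimage_ofPred_eq, hQ] using hmap

theorem repeated_eigenvalue_measure_zero_general (p : ℕ)
    [MeasurableSpace (symmetricMatrices p)] [BorelSpace (symmetricMatrices p)]
    (μ : Measure (symmetricMatrices p)) [μ.IsAddHaarMeasure] :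
    μ {A : symmetricMatrices p |
        ¬ Function.Injective (isHermitian_of_mem_symmetricMatrices A).eigenvalues} = 0 := by
  let L : symmetricMatrices p →ₗ[ℝ] Fin p × Fin p → ℝ :=
    { toFun A ij := (A : Matrix (Fin p) (Fin p) ℝ) ij.1 ij.2
      map_add' _ _ := rfl
      map_smul' _ _ := rfl }
  have hL (A : symmetricMatrices p) :
      MvPolynomial.eval (L A) (charpoly.univResultantDerivative ℝ (Fin p)) =
        (A : Matrix (Fin p) (Fin p) ℝ).charpoly.resultant
          (Polynomial.derivative (A : Matrix (Fin p) (Fin p) ℝ).charpoly) :=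
    charpoly.eval_univResultantDerivative (A : Matrix (Fin p) (Fin p) ℝ)
  let A₀ : symmetricMatrices p := ⟨diagonal (fun i => (i : ℝ)), isSymm_diagonal _⟩
  have hA₀ : MvPolynomial.eval (L A₀) (charpoly.univResultantDerivative ℝ (Fin p)) ≠ 0 := by
    rw [hL, resultant_charpoly_derivative_ne_zero_iff (charpoly_diagonal _)]
    exact Nat.cast_injective.comp Fin.val_injective
  convert μ.addHaar_setOf_eval_linearMap_eq_zero L hA₀ using 2
  ext A
  rw [Set.mem_ofPred_eq, Set.mem_ofPred_eq, hL,
    ← (isHermitian_of_mem_symmetricMatrices A).resultant_charpoly_derivative_ne_zero_iff, not_not]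

theorem repeated_eigenvalue_measure_zero (p : ℕ) (hp : 2 ≤ p)
    [MeasurableSpace (symmetricMatrices p)] [BorelSpace (symmetricMatrices p)]
    (μ : Measure (symmetricMatrices p)) [μ.IsAddHaarMeasure] :
    μ {A : symmetricMatrices p |
        ¬ Function.Injective (isHermitian_of_mem_symmetricMatrices A).eigenvalues} = 0 :=
  repeated_eigenvalue_measure_zero_general p μ
end

section
/- Let d ≥ 1 and let c : Fin d → Fin d → ℝ be a matrix of nonnegative real numbers. For each k define γ_k = Σ_{k'} c_{k k'} and for each k' define γ*_{k'} = Σ_k c_{k k'}, and assume γ_k > 0 for all k. Let λ₁, …, λ_d > 0 be real numbers. Then Σ_{k=1}^d γ_k · Real.log((1/γ_k)·Σ_{k'=1}^d c_{k k'}·λ_{k'}) ≥ Σ_{k'=1}^d γ*_{k'} · Real.log λ_{k'}. -/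
open Finset

theorem true_model_maximizes_likelihood (d : ℕ) (hd : 1 ≤ d)
    (c : Fin d → Fin d → ℝ) (hc : ∀ k k', 0 ≤ c k k')
    (γ γs : Fin d → ℝ) (hγ : γ = fun k => ∑ k', c k k')
    (hγs : γs = fun k' => ∑ k, c k k') (hγpos : ∀ k, 0 < γ k)
    (lam : Fin d → ℝ) (hlam : ∀ k', 0 < lam k') :
    ∑ k', γs k' * Real.log (lam k') ≤
      ∑ k, γ k * Real.log ((γ k)⁻¹ * ∑ k', c k k' * lam k') := by
  have key : ∀ k : Fin d,
      ∑ k', c k k' * Real.log (lam k') ≤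
        γ k * Real.log ((γ k)⁻¹ * ∑ k', c k k' * lam k') := by
    intro k
    have hg := hγpos k
    have hjen := (strictConcaveOn_log_Ioi.concaveOn).le_map_sum
      (t := Finset.univ) (w := fun k' => (γ k)⁻¹ * c k k') (p := lam)
      (fun i _ => mul_nonneg (by positivity) (hc k i))
      (by rw [← Finset.mul_sum]; rw [hγ] at hg ⊢; field_simp)
      (fun i _ => Set.mem_Ioi.mpr (hlam i))
    simp only [smul_eq_mul] at hjen
    have h1 : (∑ i : Fin d, (γ k)⁻¹ * c k i * lam i)
        = (γ k)⁻¹ * ∑ k', c k k' * lam k' := by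
      rw [Finset.mul_sum]; congr 1; ext i; ring
    rw [h1] at hjen
    calc ∑ k', c k k' * Real.log (lam k')
        = γ k * ∑ i : Fin d, (γ k)⁻¹ * c k i * Real.log (lam i) := by
          rw [Finset.mul_sum]; refine Finset.sum_congr rfl fun i _ => ?_; field_simp
      _ ≤ γ k * Real.log ((γ k)⁻¹ * ∑ k', c k k' * lam k') := by
          exact mul_le_mul_of_nonneg_left hjen hg.le
  calc ∑ k', γs k' * Real.log (lam k')
      = ∑ k, ∑ k', c k k' * Real.log (lam k') := by
        rw [Finset.sum_comm]
        refine Finset.sum_congr rfl fun k' _ => ?_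
        rw [hγs, Finset.sum_mul]
    _ ≤ _ := Finset.sum_le_sum fun k _ => key k
end

section
/- Let d ≥ 2, let λ₁ > λ₂ > … > λ_d > 0 be real numbers, let γ = (γ₁, …, γ_d) be a composition of p with part function φ : {1, …, p} → {1, …, d} (so φ(j) = k when j belongs to the k-th part), and for each j ∈ {1, …, p} let ℓ_j : ℕ → ℝ be a sequence with ℓ_j(n) → λ_{φ(j)} as n → ∞, with ℓ_j(n) > 0 and ℓ_j(n) ≥ ℓ_{j+1}(n) for all n. Then for all sufficiently large n, every relative eigengap (ℓ_j(n) − ℓ_{j+1}(n))/ℓ_j(n) with φ(j) = φ(j+1) is strictly smaller than every relative eigengap (ℓ_{j'}(n) − ℓ_{j'+1}(n))/ℓ_{j'}(n) with φ(j') ≠ φ(j'+1). -/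
open Filter

theorem hierarchical_clustering_separation (p d : ℕ) (hd : 2 ≤ d)
    (φ : Fin p → Fin d) (hφmono : Monotone φ) (hφsurj : Function.Surjective φ)
    (lam : Fin d → ℝ) (hlam_anti : StrictAnti lam) (hlam_pos : ∀ k, 0 < lam k)
    (ℓ : ℕ → Fin p → ℝ) (hℓpos : ∀ n j, 0 < ℓ n j)
    (hℓdec : ∀ n, ∀ j k : Fin p, j ≤ k → ℓ n k ≤ ℓ n j)
    (hconv : ∀ j : Fin p, Tendsto (fun n => ℓ n j) atTop (nhds (lam (φ j)))) :
    ∃ N : ℕ, ∀ n ≥ N, ∀ (j j' : Fin p) (hj : (j : ℕ) + 1 < p) (hj' : (j' : ℕ) + 1 < p),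
      φ j = φ ⟨(j : ℕ) + 1, hj⟩ → φ j' ≠ φ ⟨(j' : ℕ) + 1, hj'⟩ →
      (ℓ n j - ℓ n ⟨(j : ℕ) + 1, hj⟩) / ℓ n j <
        (ℓ n j' - ℓ n ⟨(j' : ℕ) + 1, hj'⟩) / ℓ n j' := by
  classical
  -- the finite set of ordered pairs of distinct population eigenvalue indices
  set T : Finset (Fin d × Fin d) := Finset.univ.filter (fun q => q.1 < q.2) with hT
  have hTne : T.Nonempty := by
    refine ⟨(⟨0, by omega⟩, ⟨1, by omega⟩), Finset.mem_filter.2 ⟨Finset.mem_univ _, ?_⟩⟩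
    exact Fin.mk_lt_mk.mpr Nat.zero_lt_one
  set ε : ℝ := T.inf' hTne (fun q => (lam q.1 - lam q.2) / lam q.1) with hε
  have hεpos : 0 < ε := by
    rw [hε]
    apply (Finset.lt_inf'_iff hTne).2
    intro q hq
    have hlt : q.1 < q.2 := by simpa [hT] using hq
    exact div_pos (sub_pos.2 (hlam_anti hlt)) (hlam_pos q.1)
  have hεle : ∀ a b : Fin d, a < b → ε ≤ (lam a - lam b) / lam a := by
    intro a b hab
    have hmem : (a, b) ∈ T := Finset.mem_filter.2 ⟨Finset.mem_univ _, hab⟩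
    exact Finset.inf'_le _ hmem
  -- for each j, the eventual behavior of its gap
  have key : ∀ j : Fin p, ∀ᶠ n in atTop, ∀ hj : (j : ℕ) + 1 < p,
      (φ j = φ ⟨(j : ℕ) + 1, hj⟩ →
        (ℓ n j - ℓ n ⟨(j : ℕ) + 1, hj⟩) / ℓ n j < ε / 2) ∧
      (φ j ≠ φ ⟨(j : ℕ) + 1, hj⟩ →
        ε / 2 < (ℓ n j - ℓ n ⟨(j : ℕ) + 1, hj⟩) / ℓ n j) := by
    intro j
    by_cases hj : (j : ℕ) + 1 < p
    · set j1 : Fin p := ⟨(j : ℕ) + 1, hj⟩ with hj1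
      have hgap : Tendsto (fun n => (ℓ n j - ℓ n j1) / ℓ n j) atTop
          (nhds ((lam (φ j) - lam (φ j1)) / lam (φ j))) :=
        ((hconv j).sub (hconv j1)).div (hconv j) (ne_of_gt (hlam_pos _))
      by_cases heq : φ j = φ j1
      · have h0 : (lam (φ j) - lam (φ j1)) / lam (φ j) = 0 := by
          rw [heq]; simp
        rw [h0] at hgap
        have hev := hgap.eventually (eventually_lt_nhds (by linarith : (0:ℝ) < ε / 2))
        filter_upwards [hev] with n hn
        intro hj'
        refine ⟨fun _ => hn, fun h => absurd heq h⟩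
      · have hle : φ j ≤ φ j1 := hφmono (by simp [hj1, Fin.le_def])
        have hlt : φ j < φ j1 := lt_of_le_of_ne hle heq
        have hge : ε / 2 < (lam (φ j) - lam (φ j1)) / lam (φ j) := by
          have := hεle _ _ hlt
          linarith
        have hev := hgap.eventually (eventually_gt_nhds hge)
        filter_upwards [hev] with n hn
        intro hj'
        exact ⟨fun h => absurd h heq, fun _ => hn⟩
    · exact Eventually.of_forall (fun n hj' => absurd hj' hj)
  have hall : ∀ᶠ n in atTop, ∀ j : Fin p, ∀ hj : (j : ℕ) + 1 < p,
      (φ j = φ ⟨(j : ℕ) + 1, hj⟩ →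
        (ℓ n j - ℓ n ⟨(j : ℕ) + 1, hj⟩) / ℓ n j < ε / 2) ∧
      (φ j ≠ φ ⟨(j : ℕ) + 1, hj⟩ →
        ε / 2 < (ℓ n j - ℓ n ⟨(j : ℕ) + 1, hj⟩) / ℓ n j) :=
    eventually_all.2 key
  obtain ⟨N, hN⟩ := eventually_atTop.1 hall
  refine ⟨N, fun n hn j j' hj hj' hwithin hbetween => ?_⟩
  have h1 := ((hN n hn) j hj).1 hwithin
  have h2 := ((hN n hn) j' hj').2 hbetween
  linarith
end

section
/- Let p ≥ 1, let γ = (γ₁, …, γ_d) be a composition of p with part function φ : {1, …, p} → {1, …, d}, let ℓ₁ ≥ … ≥ ℓ_p > 0 be real numbers, and let λ̂_k = (1/γ_k)·Σ_{j : φ(j) = k} ℓ_j > 0 be the block averages. Let V be a real orthogonal p×p matrix, let S = V · diag(ℓ₁, …, ℓ_p) · Vᵀ and Σ̂ = V · diag(λ̂_{φ(1)}, …, λ̂_{φ(p)}) · Vᵀ. Then Σ̂ is invertible and Real.log (det Σ̂) + trace(Σ̂⁻¹ · S) = Σ_{k=1}^d γ_k · Real.log λ̂_k + p. -/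
/-!
Conjugation by the orthogonal `V` changes neither determinant nor trace, so everything reduces to
diagonal matrices: `log det Σ̂ = ∑ⱼ log λ̂_{φ j} = ∑ₖ γₖ log λ̂ₖ`, and
`tr (Σ̂⁻¹ S) = ∑ₖ λ̂ₖ⁻¹ ∑_{φ j = k} ℓⱼ = ∑ₖ γₖ = p`, since λ̂ₖ is the mean of the ℓⱼ over block `k`.
-/

open Matrix Finset

namespace Matrix

variable {n α : Type*} [Fintype n] [DecidableEq n] [CommRing α]

theorem trace_inv_conj_mul_conj {V : Matrix n n α} (hV : IsUnit V) (A B : Matrix n n α) :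
    trace ((V * A * V⁻¹)⁻¹ * (V * B * V⁻¹)) = trace (A⁻¹ * B) := by
  have hVdet : IsUnit V.det := (isUnit_iff_isUnit_det V).mp hV
  have hVV : V⁻¹ * V = 1 := nonsing_inv_mul V hVdet
  rw [mul_inv_rev, mul_inv_rev, nonsing_inv_nonsing_inv V hVdet]
  calc trace (V * (A⁻¹ * V⁻¹) * (V * B * V⁻¹))
      = trace (V * (A⁻¹ * (V⁻¹ * V) * B) * V⁻¹) := by simp only [Matrix.mul_assoc]
    _ = trace (A⁻¹ * B) := by rw [hVV, Matrix.mul_one, trace_conj hV]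

theorem inv_diagonal_of_ne_zero {K : Type*} [Field K] {v : n → K} (hv : ∀ i, v i ≠ 0) :
    (diagonal v)⁻¹ = diagonal v⁻¹ :=
  inv_eq_left_inv <| by
    rw [diagonal_mul_diagonal, ← diagonal_one]
    exact congrArg diagonal (funext fun i => inv_mul_cancel₀ (hv i))

end Matrix

section BlockAverage

variable {ι κ : Type*} [Fintype ι] [DecidableEq κ]

def blockSize (φ : ι → κ) (k : κ) : ℕ := #{j | φ j = k}

noncomputable def blockAverage (φ : ι → κ) (ℓ : ι → ℝ) (k : κ) : ℝ :=
  (∑ j with φ j = k, ℓ j) / blockSize φ k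

theorem sum_comp_eq_sum_blockSize_smul [Fintype κ] {M : Type*} [AddCommMonoid M] (φ : ι → κ)
    (f : κ → M) :
    ∑ j, f (φ j) = ∑ k, blockSize φ k • f k := by
  simp only [← sum_fiberwise' univ φ f, sum_const, blockSize]

theorem sum_blockSize [Fintype κ] (φ : ι → κ) : ∑ k, blockSize φ k = Fintype.card ι :=
  (card_eq_sum_card_fiberwise fun j _ => mem_univ (φ j)).symm

variable {φ : ι → κ} {ℓ : ι → ℝ}

theorem blockAverage_apply_pos (hℓ : ∀ j, 0 < ℓ j) (j : ι) : 0 < blockAverage φ ℓ (φ j) := by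
  have hne : ({i | φ i = φ j} : Finset ι).Nonempty := ⟨j, by simp⟩
  exact div_pos (sum_pos (fun i _ => hℓ i) hne) (by simpa [blockSize] using hne.card_pos)

theorem inv_blockAverage_mul_blockSum (hℓ : ∀ j, 0 < ℓ j) (k : κ) :
    (blockAverage φ ℓ k)⁻¹ * ∑ j with φ j = k, ℓ j = blockSize φ k := by
  rcases eq_empty_or_nonempty ({j | φ j = k} : Finset ι) with hempty | hne
  · -- an empty block has `blockAverage = 0 / 0 = 0`
    simp [blockSize, hempty]
  · rw [blockAverage, inv_div, div_mul_cancel₀ _ (sum_pos (fun j _ => hℓ j) hne).ne']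

theorem sum_inv_blockAverage_mul [Fintype κ] (hℓ : ∀ j, 0 < ℓ j) :
    ∑ j, (blockAverage φ ℓ (φ j))⁻¹ * ℓ j = Fintype.card ι := calc
  ∑ j, (blockAverage φ ℓ (φ j))⁻¹ * ℓ j
      = ∑ k, (blockAverage φ ℓ k)⁻¹ * ∑ j with φ j = k, ℓ j := by
    rw [← sum_fiberwise univ φ]
    refine sum_congr rfl fun k _ => ?_
    rw [mul_sum]
    exact sum_congr rfl fun j hj => by rw [(mem_filter.mp hj).2]
  _ = Fintype.card ι := by
    simp only [inv_blockAverage_mul_blockSum hℓ]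
    exact_mod_cast sum_blockSize φ

end BlockAverage

theorem psa_max_loglikelihood_identity_general (p d : ℕ)
    (φ : Fin p → Fin d)
    (ℓ : Fin p → ℝ) (hℓpos : ∀ j, 0 < ℓ j)
    (γ : Fin d → ℕ) (hγ : γ = fun k => (Finset.univ.filter (fun j => φ j = k)).card)
    (lamhat : Fin d → ℝ)
    (hlamhat : lamhat = fun k => (∑ j ∈ Finset.univ.filter (fun j => φ j = k), ℓ j) / γ k)
    (V : Matrix (Fin p) (Fin p) ℝ) (hV : Vᵀ * V = 1)
    (S Sighat : Matrix (Fin p) (Fin p) ℝ)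
    (hS : S = V * Matrix.diagonal ℓ * Vᵀ)
    (hSighat : Sighat = V * Matrix.diagonal (fun j => lamhat (φ j)) * Vᵀ) :
    IsUnit Sighat.det ∧
      Real.log Sighat.det + Matrix.trace (Sighat⁻¹ * S)
        = ∑ k, (γ k : ℝ) * Real.log (lamhat k) + p := by
  obtain rfl : γ = blockSize φ := hγ
  obtain rfl : lamhat = blockAverage φ ℓ := hlamhat
  have hVunit : IsUnit V := (isUnit_iff_isUnit_det V).mpr (isUnit_det_of_left_inverse hV)
  rw [← inv_eq_left_inv hV] at hS hSighat
  subst hS hSighat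
  have hpos := blockAverage_apply_pos (φ := φ) hℓpos
  have hdet : det (V * diagonal (fun j => blockAverage φ ℓ (φ j)) * V⁻¹)
      = ∏ j, blockAverage φ ℓ (φ j) := by
    rw [det_conj hVunit, det_diagonal]
  refine ⟨hdet ▸ (prod_pos fun j _ => hpos j).ne'.isUnit, ?_⟩
  rw [trace_inv_conj_mul_conj hVunit, inv_diagonal_of_ne_zero fun j => (hpos j).ne',
    diagonal_mul_diagonal, trace_diagonal, hdet, Real.log_prod fun j _ => (hpos j).ne',
    sum_comp_eq_sum_blockSize_smul φ fun k => Real.log (blockAverage φ ℓ k)]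
  simp only [Pi.inv_apply, nsmul_eq_mul, sum_inv_blockAverage_mul hℓpos, Fintype.card_fin]

theorem psa_max_loglikelihood_identity (p d : ℕ) (hp : 1 ≤ p)
    (φ : Fin p → Fin d) (hφmono : Monotone φ) (hφsurj : Function.Surjective φ)
    (ℓ : Fin p → ℝ) (hℓdec : ∀ j k : Fin p, j ≤ k → ℓ k ≤ ℓ j) (hℓpos : ∀ j, 0 < ℓ j)
    (γ : Fin d → ℕ) (hγ : γ = fun k => (Finset.univ.filter (fun j => φ j = k)).card)
    (lamhat : Fin d → ℝ)
    (hlamhat : lamhat = fun k => (∑ j ∈ Finset.univ.filter (fun j => φ j = k), ℓ j) / γ k)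
    (V : Matrix (Fin p) (Fin p) ℝ) (hV : Vᵀ * V = 1)
    (S Sighat : Matrix (Fin p) (Fin p) ℝ)
    (hS : S = V * Matrix.diagonal ℓ * Vᵀ)
    (hSighat : Sighat = V * Matrix.diagonal (fun j => lamhat (φ j)) * Vᵀ) :
    IsUnit Sighat.det ∧
      Real.log Sighat.det + Matrix.trace (Sighat⁻¹ * S)
        = ∑ k, (γ k : ℝ) * Real.log (lamhat k) + p :=
  psa_max_loglikelihood_identity_general p d φ ℓ hℓpos γ hγ lamhat hlamhat V hV S Sighat hS hSighat
end

section
/- Let p ≥ 1, let γ = (γ₁, …, γ_d) be a composition of p with nondecreasing part function φ : {1, …, p} → {1, …, d}, and let λ₁ > λ₂ > … > λ_d > 0 be real numbers. Set Λ = diag(λ_{φ(1)}, …, λ_{φ(p)}). Let S be a real symmetric positive-semidefinite p×p matrix with eigenvalues ℓ₁ ≥ ℓ₂ ≥ … ≥ ℓ_p ≥ 0 (counted with multiplicity). Then for every real orthogonal p×p matrix Q: trace(Q · Λ⁻¹ · Qᵀ · S) ≥ Σ_{j=1}^p ℓ_j / λ_{φ(j)}. -/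
open Matrix Finset

/-- Key combinatorial lemma: for a doubly stochastic matrix `e`, a monotone `μ` and an
antitone `ℓ`, the pairing `∑ μ i * ℓ j * e i j` is at least `∑ μ k * ℓ k`. -/
lemma psa_ds_bound {n : ℕ} (μ ℓ : Fin n → ℝ) (hμ : Monotone μ)
    (hℓ : ∀ j k : Fin n, j ≤ k → ℓ k ≤ ℓ j)
    (e : Matrix (Fin n) (Fin n) ℝ) (he : e ∈ doublyStochastic ℝ (Fin n)) :
    ∑ k, μ k * ℓ k ≤ ∑ i, ∑ j, μ i * ℓ j * e i j := by
  obtain ⟨w, hw0, hw1, hwsum⟩ := exists_eq_sum_perm_of_mem_doublyStochastic he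
  have hanti : Antivary μ ℓ := by
    intro i j hij
    rcases le_total i j with h | h
    · exact absurd (hℓ i j h) (not_le.mpr hij)
    · exact hμ h
  have hperm : ∀ τ : Equiv.Perm (Fin n), ∑ k, μ k * ℓ k ≤ ∑ i, μ i * ℓ (τ i) :=
    fun τ => hanti.sum_mul_le_sum_mul_comp_perm
  have hentry : ∀ (τ : Equiv.Perm (Fin n)) (i : Fin n),
      (∑ j, μ i * ℓ j * (τ.permMatrix ℝ) i j) = μ i * ℓ (τ i) := by
    intro τ i
    simp [Equiv.Perm.permMatrix, PEquiv.toMatrix_apply, Equiv.toPEquiv_apply, mul_ite]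
  have hinner : ∀ i : Fin n, ∑ j, μ i * ℓ j * e i j = ∑ τ, w τ * (μ i * ℓ (τ i)) := by
    intro i
    rw [← hwsum]
    simp only [Matrix.sum_apply, Matrix.smul_apply, smul_eq_mul, Finset.mul_sum]
    rw [Finset.sum_comm]
    refine Finset.sum_congr rfl fun τ _ => ?_
    rw [← hentry τ i, Finset.mul_sum]
    exact Finset.sum_congr rfl fun j _ => by ring
  calc ∑ k, μ k * ℓ k = ∑ τ : Equiv.Perm (Fin n), w τ * ∑ k, μ k * ℓ k := by
        rw [← Finset.sum_mul, hw1, one_mul]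
    _ ≤ ∑ τ : Equiv.Perm (Fin n), w τ * ∑ i, μ i * ℓ (τ i) :=
        Finset.sum_le_sum fun τ _ => mul_le_mul_of_nonneg_left (hperm τ) (hw0 τ)
    _ = ∑ i, ∑ j, μ i * ℓ j * e i j := by
        simp only [hinner, Finset.mul_sum]
        exact Finset.sum_comm

/-- Trace of `diagonal μ * W * diagonal ν * Wᵀ` as a double sum. -/
lemma psa_trace_eq {n : ℕ} (μ ν : Fin n → ℝ) (W : Matrix (Fin n) (Fin n) ℝ) :
    Matrix.trace (Matrix.diagonal μ * W * Matrix.diagonal ν * Wᵀ)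
      = ∑ i, ∑ j, μ i * ν j * (W i j) ^ 2 := by
  simp only [Matrix.trace, Matrix.diag_apply, Matrix.mul_apply, Matrix.diagonal_apply,
    Matrix.transpose_apply, Finset.sum_mul, Finset.mul_sum, ite_mul, zero_mul, mul_ite, mul_zero,
    Finset.sum_ite_eq, Finset.sum_ite_eq', Finset.mem_univ, if_true]
  refine Finset.sum_congr rfl fun i _ => Finset.sum_congr rfl fun j _ => by ring

theorem psa_trace_lower_bound (p d : ℕ) (hp : 1 ≤ p)
    (φ : Fin p → Fin d) (hφmono : Monotone φ) (hφsurj : Function.Surjective φ)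
    (lam : Fin d → ℝ) (hlam_anti : StrictAnti lam) (hlam_pos : ∀ k, 0 < lam k)
    (Lam : Matrix (Fin p) (Fin p) ℝ) (hLam : Lam = Matrix.diagonal (fun j => lam (φ j)))
    (S : Matrix (Fin p) (Fin p) ℝ) (hS : S.PosSemidef)
    (ℓ : Fin p → ℝ) (hℓdec : ∀ j k : Fin p, j ≤ k → ℓ k ≤ ℓ j) (hℓnonneg : ∀ j, 0 ≤ ℓ j)
    (hℓeig : ∃ σ : Equiv.Perm (Fin p), ∀ j, hS.1.eigenvalues (σ j) = ℓ j) :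
    ∀ Q : Matrix (Fin p) (Fin p) ℝ, Qᵀ * Q = 1 →
      ∑ j, ℓ j / lam (φ j) ≤ Matrix.trace (Q * Lam⁻¹ * Qᵀ * S) := by
  intro Q hQ
  obtain ⟨σ, hσ⟩ := hℓeig
  set μ : Fin p → ℝ := fun j => (lam (φ j))⁻¹ with hμdef
  have hμmono : Monotone μ := fun a b hab =>
    inv_anti₀ (hlam_pos _) (hlam_anti.antitone (hφmono hab))
  -- inverse of Lam
  have hLaminv : Lam⁻¹ = Matrix.diagonal μ := by
    rw [hLam]
    apply Matrix.inv_eq_left_inv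
    rw [Matrix.diagonal_mul_diagonal]
    rw [show (fun j => μ j * lam (φ j)) = fun _ => (1 : ℝ) from
      funext fun j => inv_mul_cancel₀ (hlam_pos (φ j)).ne', Matrix.diagonal_one]
  -- spectral decomposition of S
  have hH := hS.1
  set V : Matrix (Fin p) (Fin p) ℝ := (hH.eigenvectorUnitary : Matrix (Fin p) (Fin p) ℝ)
    with hVdef
  set ℓ' : Fin p → ℝ := hH.eigenvalues with hℓ'def
  have hstarV : star V = Vᵀ := by
    ext i j; simp [Matrix.star_apply]
  have hspec : S = V * Matrix.diagonal ℓ' * Vᵀ := by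
    rw [← hstarV]
    have := hH.spectral_theorem
    simpa [RCLike.ofReal_real_eq_id] using this
  have hVV : Vᵀ * V = 1 := by
    rw [← hstarV]; exact Matrix.mem_unitaryGroup_iff'.mp hH.eigenvectorUnitary.2
  have hVV' : V * Vᵀ = 1 := mul_eq_one_comm.mp hVV
  have hWt : Vᵀ * Q = (Qᵀ * V)ᵀ := by
    rw [Matrix.transpose_mul, Matrix.transpose_transpose]
  have hWWt : (Qᵀ * V) * (Qᵀ * V)ᵀ = 1 := by
    rw [Matrix.transpose_mul, Matrix.transpose_transpose, mul_assoc,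
      ← mul_assoc V Vᵀ Q, hVV', one_mul, hQ]
  have hWtW : (Qᵀ * V)ᵀ * (Qᵀ * V) = 1 := mul_eq_one_comm.mp hWWt
  -- trace identity
  have htrace : Matrix.trace (Q * Lam⁻¹ * Qᵀ * S)
      = ∑ i, ∑ j, μ i * ℓ' j * ((Qᵀ * V) i j) ^ 2 := by
    rw [hLaminv, hspec]
    rw [show Q * Matrix.diagonal μ * Qᵀ * (V * Matrix.diagonal ℓ' * Vᵀ)
        = Q * (Matrix.diagonal μ * (Qᵀ * V) * Matrix.diagonal ℓ' * Vᵀ) from by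
      simp only [← mul_assoc]]
    rw [Matrix.trace_mul_comm,
      mul_assoc (Matrix.diagonal μ * (Qᵀ * V) * Matrix.diagonal ℓ') Vᵀ Q, hWt,
      psa_trace_eq]
  -- the squared entries form a doubly stochastic matrix
  set e : Matrix (Fin p) (Fin p) ℝ := fun i j => ((Qᵀ * V) i j) ^ 2 with hedef
  have hrow : ∀ i, ∑ j, e i j = 1 := by
    intro i
    have := congrFun (congrFun hWWt i) i
    simpa [hedef, Matrix.mul_apply, pow_two, Matrix.one_apply, mul_comm] using this
  have hcol : ∀ j, ∑ i, e i j = 1 := by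
    intro j
    have := congrFun (congrFun hWtW j) j
    simpa [hedef, Matrix.mul_apply, pow_two, Matrix.one_apply, mul_comm] using this
  -- permuted matrix, still doubly stochastic
  set e' : Matrix (Fin p) (Fin p) ℝ := fun i j => e i (σ j) with he'def
  have he'mem : e' ∈ doublyStochastic ℝ (Fin p) := by
    rw [mem_doublyStochastic_iff_sum]
    refine ⟨fun i j => sq_nonneg _, fun i => ?_, fun j => ?_⟩
    · simp only [he'def]
      rw [Equiv.sum_comp σ (fun j => e i j)]
      exact hrow i
    · exact hcol (σ j)
  -- reindex the double sum by σ
  have hreindex : ∑ i, ∑ j, μ i * ℓ' j * e i j = ∑ i, ∑ j, μ i * ℓ j * e' i j := by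
    refine Finset.sum_congr rfl fun i _ => ?_
    rw [← Equiv.sum_comp σ (fun j => μ i * ℓ' j * e i j)]
    refine Finset.sum_congr rfl fun j _ => by simp only [he'def, hσ]
  -- conclude
  have hlhs : ∑ j, ℓ j / lam (φ j) = ∑ k, μ k * ℓ k :=
    Finset.sum_congr rfl fun j _ => by rw [div_eq_mul_inv, mul_comm]
  rw [htrace, hlhs, hreindex]
  exact psa_ds_bound μ ℓ hμmono hℓdec e' he'mem
end
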